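/- arXiv:1302.3940 — 2 statements merged into one kernel-verified Lean document; each statement's English description precedes it below -/
import Mathlib

section
/- If X is an irreducible shift space with infinitely many points and f is a symbol of X (a block of length 1), then there exist blocks a, b ∈ B(X) such that: (a) faf ∈ B(X) and fbf ∈ B(X), (b) the symbol f does not appear in b, and (c) the block fbfa does not appear in any bi-infinite sequence x ∈ A^ℤ satisfying σ^{|a|+1}(x) = x. -/
open Set Function

/-- The map `x ↦ σᵐ(x)` on the full shift `A^ℤ`, where `σᵐ(x)_i = x_{i+m}`. -/
def shiftZ (A : Type*) (m : ℤ) : (ℤ → A) → ℤ → A := fun x i => x (i + m)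

/-- The shift map `σ` on the full shift `A^ℤ`: `σ(x)_i = x_{i+1}`. -/
abbrev shiftMap (A : Type*) : (ℤ → A) → ℤ → A := shiftZ A 1

/-- The inverse shift map `σ⁻¹`: `σ⁻¹(x)_i = x_{i-1}`. -/
abbrev shiftInv (A : Type*) : (ℤ → A) → ℤ → A := shiftZ A (-1)

/-- The reversal map `ρ`: `ρ(x)_i = x_{-i}`. -/
def revMap (A : Type*) : (ℤ → A) → ℤ → A := fun x i => x (-i)

/-- A shift space over `A`: a nonempty closed subset of `A^ℤ` with `σ(X) = X`. -/
def IsShiftSpace {A : Type*} [TopologicalSpace A] (X : Set (ℤ → A)) : Prop :=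
  X.Nonempty ∧ IsClosed X ∧ shiftMap A '' X = X

/-- The word `w` occurs in `x` at position `i`, i.e. `x_{[i, i+|w|-1]} = w`. -/
def OccursAt {A : Type*} (w : List A) (x : ℤ → A) (i : ℤ) : Prop :=
  ∀ k : Fin w.length, x (i + (k : ℕ)) = w.get k

/-- `w` is a block of `X`: it occurs in some point of `X`. -/
def IsBlockOf {A : Type*} (X : Set (ℤ → A)) (w : List A) : Prop :=
  ∃ x ∈ X, ∃ i : ℤ, OccursAt w x i

/-- `X` is irreducible: any two blocks can be joined by a block. -/
def ShiftIrreducible {A : Type*} (X : Set (ℤ → A)) : Prop :=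
  ∀ u v : List A, IsBlockOf X u → IsBlockOf X v → ∃ w : List A, IsBlockOf X (u ++ w ++ v)

/-- `w` is a finitary (intrinsically synchronizing) block of `X`. -/
def IsFinitary {A : Type*} (X : Set (ℤ → A)) (w : List A) : Prop :=
  IsBlockOf X w ∧ ∀ u v : List A, IsBlockOf X (u ++ w) → IsBlockOf X (w ++ v) →
    IsBlockOf X (u ++ w ++ v)

/-- A synchronized system: an irreducible shift space with a finitary block. -/
def IsSynchronized {A : Type*} [TopologicalSpace A] (X : Set (ℤ → A)) : Prop :=
  IsShiftSpace X ∧ ShiftIrreducible X ∧ ∃ w : List A, IsFinitary X w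

/-- `φ` (as a map of the ambient full shift) restricts to a flip for `(X, σ_X)`:
a homeomorphism `X → X` with `φ ∘ φ = id` and `φ ∘ σ_X = σ_X⁻¹ ∘ φ`.
(Being a homeomorphism is automatic from continuity and `φ ∘ φ = id` on `X`.) -/
def IsFlip {A : Type*} [TopologicalSpace A] (X : Set (ℤ → A))
    (φ : (ℤ → A) → ℤ → A) : Prop :=
  MapsTo φ X X ∧ ContinuousOn φ X ∧ (∀ x ∈ X, φ (φ x) = x) ∧
    ∀ x ∈ X, φ (shiftMap A x) = shiftInv A (φ x)

/-- The shift-flip systems `(X, σ_X, φ)` and `(Y, σ_Y, ψ)` are conjugate: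
there is a homeomorphism `Φ : X → Y` with `Φ ∘ σ_X = σ_Y ∘ Φ` and `Φ ∘ φ = ψ ∘ Φ`. -/
def SystemConj {A B : Type*} [TopologicalSpace A] [TopologicalSpace B]
    (X : Set (ℤ → A)) (φ : (ℤ → A) → ℤ → A)
    (Y : Set (ℤ → B)) (ψ : (ℤ → B) → ℤ → B) : Prop :=
  ∃ (Φ : (ℤ → A) → ℤ → B) (Ψ : (ℤ → B) → ℤ → A),
    MapsTo Φ X Y ∧ ContinuousOn Φ X ∧ MapsTo Ψ Y X ∧ ContinuousOn Ψ Y ∧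
    InvOn Ψ Φ X Y ∧
    (∀ x ∈ X, Φ (shiftMap A x) = shiftMap B (Φ x)) ∧ ∀ x ∈ X, Φ (φ x) = ψ (Φ x)

/-- Two flips `φ, φ'` for `(X, σ_X)` are conjugate. -/
def FlipConj {A : Type*} [TopologicalSpace A] (X : Set (ℤ → A))
    (φ φ' : (ℤ → A) → ℤ → A) : Prop :=
  SystemConj X φ X φ'

/-- `F(φ; n) = {x ∈ X : σ_X^n(x) = x and φ(x) = x}`. -/
def flipFix {A : Type*} (X : Set (ℤ → A)) (φ : (ℤ → A) → ℤ → A) (n : ℕ) :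
    Set (ℤ → A) :=
  {x ∈ X | (shiftMap A)^[n] x = x ∧ φ x = x}

/-- `A(φ)`: points of `X` in which some finitary block occurs infinitely often and
which differ from their `φ`-image in at least one but only finitely many coordinates. -/
def flipAsym {A : Type*} (X : Set (ℤ → A)) (φ : (ℤ → A) → ℤ → A) :
    Set (ℤ → A) :=
  {x ∈ X | (∃ w : List A, IsFinitary X w ∧ {i : ℤ | OccursAt w x i}.Infinite) ∧
    {i : ℤ | φ x i ≠ x i}.Nonempty ∧ {i : ℤ | φ x i ≠ x i}.Finite}

/-- `x` is a bi-infinite concatenation of words from `C`. -/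
def IsConcat {A : Type*} (C : Set (List A)) (x : ℤ → A) : Prop :=
  ∃ t : ℤ → ℤ, StrictMono t ∧ (∀ n : ℤ, ∃ j : ℤ, t j ≤ n ∧ n < t (j + 1)) ∧
    ∀ j : ℤ, ∃ w ∈ C, t (j + 1) = t j + w.length ∧ OccursAt w x (t j)

/-- A coded system: a shift space in which the set of bi-infinite concatenations of
words from some code `C` is dense. -/
def IsCoded {A : Type*} [TopologicalSpace A] (X : Set (ℤ → A)) : Prop :=
  IsShiftSpace X ∧ ∃ C : Set (List A), closure {x | IsConcat C x} = X

/-! A return word to `f` is a word `c` with `f ∉ c` and `fcf ∈ B(X)`; irreducibility provides one,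
`b`. If `b` were the only one, then between any two occurrences of `f` in a point of `X` one would
read a piece of the periodic point `(fb)^∞`; by irreducibility every block of `X` sits between two
occurrences of `f`, so every point of `X` is a shift of `(fb)^∞` and `X` is finite. Hence there is
a second return word `a ≠ b`. In a point of period `|a| + 1` containing `fbfa` the symbol `f`
recurs every `|a| + 1` steps and nowhere in between, which forces `|b| = |a|` and then `b = a`. -/

section

variable {A : Type*}

theorem occursAt_append {u v : List A} {x : ℤ → A} {i : ℤ} :
    OccursAt (u ++ v) x i ↔ OccursAt u x i ∧ OccursAt v x (i + u.length) := by
  simp only [OccursAt, Fin.forall_iff, List.get_eq_getElem, List.length_append]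
  constructor
  · intro h
    refine ⟨fun k hk => ?_, fun k hk => ?_⟩
    · simpa [List.getElem_append_left hk] using h k (by omega)
    · simpa [List.getElem_append_right, add_assoc] using h (u.length + k) (by omega)
  · rintro ⟨hu, hv⟩ k hk
    by_cases hku : k < u.length
    · simpa [List.getElem_append_left hku] using hu k hku
    · have := hv (k - u.length) (by omega)
      rw [List.getElem_append_right (by omega)]
      rwa [add_assoc, ← Nat.cast_add, Nat.add_sub_cancel' (by omega)] at this

theorem occursAt_singleton {a : A} {x : ℤ → A} {i : ℤ} : OccursAt [a] x i ↔ x i = a := by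
  simp [OccursAt]

theorem occursAt_ofFn (x : ℤ → A) (i : ℤ) (n : ℕ) :
    OccursAt (List.ofFn fun k : Fin n => x (i + k)) x i := by
  intro k
  simp

theorem OccursAt.apply_mem {w : List A} {x : ℤ → A} {i : ℤ} (h : OccursAt w x i) {k : ℕ}
    (hk : k < w.length) : x (i + k) ∈ w := by
  rw [h ⟨k, hk⟩]
  exact List.get_mem w _

theorem OccursAt.apply_eq_apply {w : List A} {x x' : ℤ → A} {i j : ℤ} (h : OccursAt w x i)
    (h' : OccursAt w x' j) {k : ℕ} (hk : k < w.length) : x (i + k) = x' (j + k) :=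
  (h ⟨k, hk⟩).trans (h' ⟨k, hk⟩).symm

theorem shiftMap_iterate_apply (n : ℕ) (x : ℤ → A) (i : ℤ) :
    (shiftMap A)^[n] x i = x (i + n) := by
  induction n generalizing x with
  | zero => simp
  | succ n ih =>
    rw [Function.iterate_succ_apply, ih, shiftMap, shiftZ]
    push_cast
    ring_nf

theorem periodic_of_shiftMap_iterate_eq {n : ℕ} {x : ℤ → A} (hx : (shiftMap A)^[n] x = x) :
    Function.Periodic x n := fun t => by
  rw [← shiftMap_iterate_apply n x t, hx]

theorem Function.Periodic.apply_emod {α : Type*} {g : ℤ → α} {p : ℤ} (h : Function.Periodic g p)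
    (n : ℤ) : g (n % p) = g n := by
  rw [Int.emod_def, mul_comm]
  exact h.sub_int_mul_eq _

theorem Function.Periodic.ext_of_lt_period {α : Type*} {g h : ℤ → α} {p : ℤ} (hp : 0 < p)
    (hg : Function.Periodic g p) (hh : Function.Periodic h p)
    (heq : ∀ k : ℕ, (k : ℤ) < p → g k = h k) : g = h := by
  funext n
  have h0 := Int.emod_nonneg n hp.ne'
  rw [← hg.apply_emod, ← hh.apply_emod, ← Int.toNat_of_nonneg h0]
  exact heq _ (by rw [Int.toNat_of_nonneg h0]; exact Int.emod_lt_of_pos n hp)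

/-- The periodic point `⋯ a c a c ⋯`, with `a` at coordinate `0`. -/
def periodicPoint (a : A) (c : List A) (n : ℤ) : A := (a :: c).get (n : ZMod (c.length + 1))

theorem periodicPoint_periodic (a : A) (c : List A) :
    Function.Periodic (periodicPoint a c) (c.length + 1) := by
  intro n
  simp [periodicPoint]

@[simp]
theorem periodicPoint_zero (a : A) (c : List A) : periodicPoint a c 0 = a := rfl

theorem occursAt_periodicPoint (a : A) (c : List A) :
    OccursAt ([a] ++ c ++ [a]) (periodicPoint a c) 0 := by
  refine occursAt_append.2 ⟨fun k => ?_, occursAt_singleton.2 ?_⟩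
  · have hk : (k : ℕ) < c.length + 1 := by simpa using k.isLt
    simp only [periodicPoint, zero_add, Int.cast_natCast]
    congr 1
    ext
    exact ZMod.val_cast_of_lt hk
  · simpa [add_comm] using (periodicPoint_periodic a c).eq

theorem not_occursAt_of_periodic {f : A} {a b : List A} (ha : f ∉ a) (hb : f ∉ b) (hab : a ≠ b)
    {x : ℤ → A} (hx : Function.Periodic x (a.length + 1)) (i : ℤ) :
    ¬ OccursAt ([f] ++ b ++ [f] ++ a) x i := by
  intro h
  simp only [occursAt_append, occursAt_singleton, List.length_append, List.length_singleton] at h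
  obtain ⟨⟨⟨hi, hbx⟩, -⟩, hax⟩ := h
  push_cast at hax hbx
  -- `f` sits at `i` and `i + |b| + 1`, nowhere strictly between them or in the next `|a|` places,
  -- yet also at `i + |a| + 1`
  have hip : x (i + (a.length + 1)) = f := (hx i).trans hi
  rcases lt_trichotomy a.length b.length with hlt | heq | hgt
  · have := hbx.apply_mem hlt
    rw [add_comm (a.length : ℤ), ← add_assoc] at hip
    exact hb (hip ▸ this)
  · refine hab (List.ext_getElem heq fun n hna hnb => ?_)
    have h1 := hax ⟨n, hna⟩
    have h2 := hbx ⟨n, hnb⟩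
    have h3 := hx (i + 1 + n)
    simp only [List.get_eq_getElem] at h1 h2
    rw [← h1, ← h2, ← h3]
    congr 1
    omega
  · have := hax.apply_mem (k := a.length - b.length - 1) (by omega)
    have hpos : i + (1 + b.length + 1) + ↑(a.length - b.length - 1) = i + (a.length + 1) := by
      omega
    rw [hpos] at this
    exact ha (hip ▸ this)

def IsReturnWord (X : Set (ℤ → A)) (f : A) (c : List A) : Prop :=
  f ∉ c ∧ IsBlockOf X ([f] ++ c ++ [f])

section ReturnWords

variable {X : Set (ℤ → A)} {f : A} {c : List A}

theorem exists_returnWord_occursAt {y : ℤ → A} (hy : y ∈ X) {i : ℤ} (hi : y i = f) {n : ℕ}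
    (hn : y (i + (n + 1)) = f) :
    ∃ c, IsReturnWord X f c ∧ c.length ≤ n ∧ OccursAt ([f] ++ c ++ [f]) y i := by
  classical
  have hex : ∃ m : ℕ, y (i + (m + 1)) = f := ⟨n, hn⟩
  set c := List.ofFn fun k : Fin (Nat.find hex) => y (i + 1 + k)
  have hocc : OccursAt ([f] ++ c ++ [f]) y i := by
    refine occursAt_append.2 ⟨occursAt_append.2 ⟨occursAt_singleton.2 hi, ?_⟩, ?_⟩
    · simpa using occursAt_ofFn y (i + 1) (Nat.find hex)
    · rw [occursAt_singleton]
      simpa [c, add_comm] using Nat.find_spec hex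
  refine ⟨c, ⟨?_, y, hy, i, hocc⟩, by simpa [c] using Nat.find_min' hex hn, hocc⟩
  simp only [c, List.mem_ofFn, not_exists]
  intro k hk
  exact Nat.find_min hex k.isLt (by convert hk using 2; ring)

theorem exists_returnWord (hirr : ShiftIrreducible X) (hf : IsBlockOf X [f]) :
    ∃ c, IsReturnWord X f c := by
  obtain ⟨w, y, hy, i, hocc⟩ := hirr [f] [f] hf hf
  simp only [occursAt_append, occursAt_singleton, List.length_append, List.length_singleton] at hocc
  obtain ⟨c, hc, -⟩ := exists_returnWord_occursAt hy hocc.1.1 (n := w.length) <| by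
    simpa [add_comm] using hocc.2
  exact ⟨c, hc⟩

theorem eq_periodicPoint_of_returnWord_unique
    (huniq : ∀ c', IsReturnWord X f c' → c' = c) {y : ℤ → A} (hy : y ∈ X) {i : ℤ} (hi : y i = f)
    {n : ℕ} (hn : y (i + n) = f) {k : ℕ} (hk : k ≤ n) : y (i + k) = periodicPoint f c k := by
  induction n using Nat.strong_induction_on generalizing i k with
  | _ n ih =>
    rcases n with _ | m
    · obtain rfl : k = 0 := by omega
      simpa using hi
    push_cast at hn
    -- the first `f` after position `i` closes a return word, which must be `c`
    obtain ⟨c', hc', hlen, hocc⟩ := exists_returnWord_occursAt hy hi hn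
    obtain rfl := huniq c' hc'
    by_cases hkp : k ≤ c'.length + 1
    · simpa using hocc.apply_eq_apply (occursAt_periodicPoint f c') (by simp; omega)
    have hnext : y (i + (c'.length + 1 : ℕ)) = f := by
      simpa [(periodicPoint_periodic f c').eq] using
        hocc.apply_eq_apply (occursAt_periodicPoint f c') (k := c'.length + 1) (by simp)
    have hrest := ih (m + 1 - (c'.length + 1)) (by omega) hnext (k := k - (c'.length + 1))
      (by convert hn using 2; omega) (by omega)
    rw [show (k : ℤ) = (k - (c'.length + 1) : ℕ) + (c'.length + 1) by omega,
      periodicPoint_periodic, ← hrest]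
    congr 1
    omega

theorem exists_occursAt_periodicPoint_of_returnWord_unique (hirr : ShiftIrreducible X)
    (hf : IsBlockOf X [f]) (huniq : ∀ c', IsReturnWord X f c' → c' = c)
    {u : List A} (hu : IsBlockOf X u) : ∃ r : ℤ, OccursAt u (periodicPoint f c) r := by
  obtain ⟨w₁, h₁⟩ := hirr [f] u hf hu
  obtain ⟨w₂, y, hy, i, hocc⟩ := hirr ([f] ++ w₁ ++ u) [f] h₁ hf
  simp only [occursAt_append, occursAt_singleton, List.length_append, List.length_singleton] at hocc
  obtain ⟨⟨⟨⟨hi, -⟩, hux⟩, -⟩, hend⟩ := hocc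
  refine ⟨(1 + w₁.length : ℕ), fun k => ?_⟩
  have := eq_periodicPoint_of_returnWord_unique huniq hy hi hend (k := 1 + w₁.length + k) (by omega)
  rw [← hux k]
  push_cast at this ⊢
  rw [← this]
  ring_nf

theorem periodic_of_returnWord_unique (hirr : ShiftIrreducible X) (hf : IsBlockOf X [f])
    (huniq : ∀ c', IsReturnWord X f c' → c' = c) {x : ℤ → A} (hx : x ∈ X) :
    Function.Periodic x (c.length + 1) := by
  intro t
  have hwin := occursAt_ofFn x t (c.length + 2)
  obtain ⟨r, hr⟩ := exists_occursAt_periodicPoint_of_returnWord_unique hirr hf huniq ⟨x, hx, t, hwin⟩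
  have h0 := hwin.apply_eq_apply hr (k := 0) (by simp)
  have hp := hwin.apply_eq_apply hr (k := c.length + 1) (by simp)
  push_cast at h0 hp
  rw [add_zero, add_zero] at h0
  rw [h0, hp, periodicPoint_periodic]

theorem exists_shiftZ_periodicPoint_eq_of_returnWord_unique (hirr : ShiftIrreducible X)
    (hf : IsBlockOf X [f]) (huniq : ∀ c', IsReturnWord X f c' → c' = c) {x : ℤ → A}
    (hx : x ∈ X) : ∃ r ∈ Set.Ico 0 (c.length + 1 : ℤ), shiftZ A r (periodicPoint f c) = x := by
  have hwin := occursAt_ofFn x 0 (c.length + 1)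
  obtain ⟨r, hr⟩ := exists_occursAt_periodicPoint_of_returnWord_unique hirr hf huniq ⟨x, hx, 0, hwin⟩
  have hz := periodicPoint_periodic f c
  refine ⟨r % (c.length + 1), ⟨Int.emod_nonneg _ (by omega), Int.emod_lt_of_pos _ (by omega)⟩,
    (hz.add_const _).ext_of_lt_period (by omega) (periodic_of_returnWord_unique hirr hf huniq hx)
      fun k hk => ?_⟩
  rw [shiftZ, (hz.const_add (k : ℤ)).apply_emod, add_comm]
  simpa using (hwin.apply_eq_apply hr (k := k) (by simpa using hk)).symm

theorem finite_of_returnWord_unique (hirr : ShiftIrreducible X) (hf : IsBlockOf X [f])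
    (huniq : ∀ c', IsReturnWord X f c' → c' = c) : X.Finite :=
  ((Set.finite_Ico _ _).image _).subset fun _ hx =>
    exists_shiftZ_periodicPoint_eq_of_returnWord_unique hirr hf huniq hx

end ReturnWords

end

theorem exists_blocks_faf_fbf_general
    {A : Type*}
    (X : Set (ℤ → A)) (hirr : ShiftIrreducible X)
    (hinf : X.Infinite) (f : A) (hf : IsBlockOf X [f]) :
    ∃ a b : List A, IsBlockOf X ([f] ++ a ++ [f]) ∧ IsBlockOf X ([f] ++ b ++ [f]) ∧
      f ∉ b ∧
      ∀ x : ℤ → A, (shiftMap A)^[a.length + 1] x = x →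
        ∀ i : ℤ, ¬ OccursAt ([f] ++ b ++ [f] ++ a) x i := by
  obtain ⟨b, hb⟩ := exists_returnWord hirr hf
  obtain ⟨a, ha, hab⟩ : ∃ a, IsReturnWord X f a ∧ a ≠ b := by
    by_contra! h
    exact hinf (finite_of_returnWord_unique hirr hf h)
  refine ⟨a, b, ha.2, hb.2, hb.1, fun x hx => not_occursAt_of_periodic ha.1 hb.1 hab ?_⟩
  exact_mod_cast periodic_of_shiftMap_iterate_eq hx

/-- **Lemma 2.2.** If `X` is an irreducible shift space with infinitely many points and
`f` is a symbol of `X`, then there are blocks `a, b ∈ B(X)` such that (a) `faf` and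
`fbf` are blocks of `X`, (b) `f` does not appear in `b`, and (c) `fbfa` does not appear
in any `(|a|+1)`-periodic point of the full shift. -/
theorem exists_blocks_faf_fbf
    {A : Type*} [Fintype A] [TopologicalSpace A] [DiscreteTopology A]
    (X : Set (ℤ → A)) (hX : IsShiftSpace X) (hirr : ShiftIrreducible X)
    (hinf : X.Infinite) (f : A) (hf : IsBlockOf X [f]) :
    ∃ a b : List A, IsBlockOf X ([f] ++ a ++ [f]) ∧ IsBlockOf X ([f] ++ b ++ [f]) ∧
      f ∉ b ∧
      ∀ x : ℤ → A, (shiftMap A)^[a.length + 1] x = x →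
        ∀ i : ℤ, ¬ OccursAt ([f] ++ b ++ [f] ++ a) x i :=
  exists_blocks_faf_fbf_general X hirr hinf f hf
end

section
/- Let X be a shift space and φ a flip for (X, σ_X). Then for every m ∈ ℤ the map σ_X^m∘φ is a flip for (X, σ_X); if X is infinite, the flips σ_X^m∘φ, m ∈ ℤ, are pairwise distinct; and for all m, n ∈ ℤ with n − m even, the flips σ_X^m∘φ and σ_X^n∘φ are conjugate. -/
open Set Function

/-!
Since `φ ∘ σᵐ = σ⁻ᵐ ∘ φ`, conjugating any flip `ψ` by `σᵏ` gives `σᵏ ∘ ψ ∘ σ⁻ᵏ = σ²ᵏ ∘ ψ`, which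
yields the conjugacies. If `σᵐ ∘ φ = σⁿ ∘ φ` on `X`, then, `φ` being onto `X`, `σᵐ = σⁿ` on `X`:
every point of `X` is `(n - m)`-periodic, and over a finite alphabet there are only finitely
many such points.
-/

section Shift

variable {A : Type*}

@[simp]
lemma shiftZ_apply (m : ℤ) (x : ℤ → A) (i : ℤ) : shiftZ A m x i = x (i + m) := rfl

@[simp]
lemma shiftZ_zero : shiftZ A 0 = id := by
  funext x i
  simp

lemma shiftZ_add (m n : ℤ) : shiftZ A (m + n) = shiftZ A m ∘ shiftZ A n := by
  funext x i
  simp [add_comm m n, add_assoc]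

lemma shiftZ_shiftZ (m n : ℤ) (x : ℤ → A) : shiftZ A m (shiftZ A n x) = shiftZ A (m + n) x := by
  rw [shiftZ_add, comp_apply]

lemma continuous_shiftZ [TopologicalSpace A] (m : ℤ) : Continuous (shiftZ A m) :=
  continuous_pi fun i => continuous_apply (i + m)

lemma periodic_of_shiftZ_eq {m n : ℤ} {y : ℤ → A} (h : shiftZ A m y = shiftZ A n y) :
    Periodic y (n - m) := fun i => by
  have hi := congrFun h (i - m)
  simp only [shiftZ_apply, sub_add_cancel] at hi
  rw [hi, sub_add_eq_add_sub, add_sub_assoc]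

lemma finite_setOf_periodic [Finite A] {d : ℤ} (hd : d ≠ 0) :
    {y : ℤ → A | Periodic y d}.Finite := by
  set c := |d|
  have hc : 0 < c := abs_pos.2 hd
  have hperiod : ∀ y : ℤ → A, Periodic y d → Periodic y c := fun y hy => by
    rcases abs_choice d with h | h <;> simp only [c, h]
    exacts [hy, hy.neg]
  have hinj : InjOn (fun (y : ℤ → A) (r : Set.Ico 0 c) => y r) {y : ℤ → A | Periodic y d} := by
    intro y hy z hz hyz
    funext i
    have hmod : i % c = i - (i / c) • c := by rw [Int.emod_def, smul_eq_mul, mul_comm]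
    have hi : y (i % c) = z (i % c) :=
      congrFun hyz ⟨i % c, Int.emod_nonneg i hc.ne', Int.emod_lt_of_pos i hc⟩
    rwa [hmod, (hperiod y hy).sub_zsmul_eq, (hperiod z hz).sub_zsmul_eq] at hi
  exact Set.Finite.of_finite_image (Set.toFinite _) hinj

variable {X : Set (ℤ → A)}

lemma mapsTo_shiftZ (hX : shiftMap A '' X = X) (m : ℤ) : MapsTo (shiftZ A m) X X := by
  have h_one : MapsTo (shiftZ A 1) X X := fun x hx => hX ▸ mem_image_of_mem _ hx
  have h_neg_one : MapsTo (shiftZ A (-1)) X X := by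
    intro x hx
    rw [← hX] at hx
    obtain ⟨y, hy, rfl⟩ := hx
    simpa [shiftZ_shiftZ] using hy
  induction m using Int.induction_on with
  | zero => simpa using mapsTo_id X
  | succ k ih => simpa [shiftZ_add] using ih.comp h_one
  | pred k ih => simpa [sub_eq_add_neg, shiftZ_add] using ih.comp h_neg_one

lemma flipConj_of_shiftZ [TopologicalSpace A] (hX : shiftMap A '' X = X)
    {φ φ' : (ℤ → A) → ℤ → A} (k : ℤ) (h : ∀ x ∈ X, shiftZ A k (φ x) = φ' (shiftZ A k x)) :
    FlipConj X φ φ' := by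
  refine ⟨shiftZ A k, shiftZ A (-k), mapsTo_shiftZ hX k, (continuous_shiftZ k).continuousOn,
    mapsTo_shiftZ hX (-k), (continuous_shiftZ (-k)).continuousOn, ⟨?_, ?_⟩, ?_, h⟩
  · intro x _
    simp [shiftZ_shiftZ]
  · intro x _
    simp [shiftZ_shiftZ]
  · intro x _
    simp [shiftZ_shiftZ, add_comm]

namespace IsFlip

variable [TopologicalSpace A] {φ : (ℤ → A) → ℤ → A}

lemma apply_shiftZ (hX : shiftMap A '' X = X) (hφ : IsFlip X φ) (m : ℤ) :
    ∀ x ∈ X, φ (shiftZ A m x) = shiftZ A (-m) (φ x) := by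
  have h_neg_one : ∀ x ∈ X, φ (shiftZ A (-1) x) = shiftZ A 1 (φ x) := fun x hx => by
    have h := congrArg (shiftZ A 1) (hφ.2.2.2 _ (mapsTo_shiftZ hX (-1) hx))
    simpa [shiftZ_shiftZ] using h.symm
  induction m using Int.induction_on with
  | zero => simp
  | succ k ih =>
    intro x hx
    rw [add_comm, ← shiftZ_shiftZ, hφ.2.2.2 _ (mapsTo_shiftZ hX k hx), ih x hx, shiftInv,
      shiftZ_shiftZ]
    ring_nf
  | pred k ih =>
    intro x hx
    rw [sub_eq_neg_add, ← shiftZ_shiftZ, h_neg_one _ (mapsTo_shiftZ hX _ hx), ih x hx,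
      shiftZ_shiftZ]
    ring_nf

lemma shiftZ_comp (hX : shiftMap A '' X = X) (hφ : IsFlip X φ) (m : ℤ) :
    IsFlip X (shiftZ A m ∘ φ) := by
  refine ⟨(mapsTo_shiftZ hX m).comp hφ.1, (continuous_shiftZ m).comp_continuousOn hφ.2.1,
    fun x hx => ?_, fun x hx => ?_⟩
  · simp [hφ.apply_shiftZ hX m _ (hφ.1 hx), shiftZ_shiftZ, hφ.2.2.1 x hx]
  · simp [hφ.2.2.2 x hx, shiftZ_shiftZ, add_comm]

lemma periodic_of_eqOn_shiftZ_comp (hφ : IsFlip X φ) {m n : ℤ}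
    (h : EqOn (shiftZ A m ∘ φ) (shiftZ A n ∘ φ) X) : ∀ y ∈ X, Periodic y (n - m) := by
  intro y hy
  have hy' := h (hφ.1 hy)
  simp only [comp_apply, hφ.2.2.1 y hy] at hy'
  exact periodic_of_shiftZ_eq hy'

lemma not_eqOn_shiftZ_comp [Finite A] (hφ : IsFlip X φ) (hinf : X.Infinite) {m n : ℤ}
    (hmn : m ≠ n) : ¬ EqOn (shiftZ A m ∘ φ) (shiftZ A n ∘ φ) X := fun h =>
  hinf <| (finite_setOf_periodic (sub_ne_zero.2 hmn.symm)).subset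
    (hφ.periodic_of_eqOn_shiftZ_comp h)

lemma flipConj_shiftZ_comp (hX : shiftMap A '' X = X) (hφ : IsFlip X φ) (k : ℤ) :
    FlipConj X φ (shiftZ A (k + k) ∘ φ) :=
  flipConj_of_shiftZ hX k fun x hx => by
    rw [comp_apply, hφ.apply_shiftZ hX k x hx, shiftZ_shiftZ]
    ring_nf

end IsFlip

end Shift

theorem shift_pow_comp_flip_general
    {A : Type*} [Fintype A] [TopologicalSpace A]
    (X : Set (ℤ → A)) (hX : IsShiftSpace X)
    (φ : (ℤ → A) → ℤ → A) (hφ : IsFlip X φ) :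
    (∀ m : ℤ, IsFlip X (shiftZ A m ∘ φ)) ∧
    (X.Infinite → ∀ m n : ℤ, m ≠ n →
      ¬ Set.EqOn (shiftZ A m ∘ φ) (shiftZ A n ∘ φ) X) ∧
    (∀ m n : ℤ, Even (n - m) → FlipConj X (shiftZ A m ∘ φ) (shiftZ A n ∘ φ)) := by
  refine ⟨hφ.shiftZ_comp hX.2.2, fun hinf m n hmn => hφ.not_eqOn_shiftZ_comp hinf hmn, ?_⟩
  rintro m n ⟨k, hk⟩
  have hn : shiftZ A n ∘ φ = shiftZ A (k + k) ∘ (shiftZ A m ∘ φ) := by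
    rw [← comp_assoc, ← shiftZ_add, ← hk, sub_add_cancel]
  rw [hn]
  exact (hφ.shiftZ_comp hX.2.2 m).flipConj_shiftZ_comp hX.2.2 k

/-- Let `X` be a shift space and `φ` a flip for `(X, σ_X)`. Then every `σ_X^m ∘ φ`,
`m ∈ ℤ`, is a flip for `(X, σ_X)`; if `X` is infinite, these flips are pairwise
distinct (as maps of `X`); and `σ_X^m ∘ φ` and `σ_X^n ∘ φ` are conjugate whenever
`n - m` is even. -/
theorem shift_pow_comp_flip
    {A : Type*} [Fintype A] [TopologicalSpace A] [DiscreteTopology A]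
    (X : Set (ℤ → A)) (hX : IsShiftSpace X)
    (φ : (ℤ → A) → ℤ → A) (hφ : IsFlip X φ) :
    (∀ m : ℤ, IsFlip X (shiftZ A m ∘ φ)) ∧
    (X.Infinite → ∀ m n : ℤ, m ≠ n →
      ¬ Set.EqOn (shiftZ A m ∘ φ) (shiftZ A n ∘ φ) X) ∧
    (∀ m n : ℤ, Even (n - m) → FlipConj X (shiftZ A m ∘ φ) (shiftZ A n ∘ φ)) :=
  shift_pow_comp_flip_general X hX φ hφ
end
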